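/- Let H be a hypergraph and G its incidence graph. Then H is eulerian if and only if G has a spanning subgraph G' with at most one non-trivial connected component such that deg_{G'}(e) = 2 for every e-vertex e and deg_{G'}(v) is even for every v-vertex v. -/

import Mathlib

/-- A closed trail in a hypergraph with vertex type `V` and edge index type `E`,
where `F e` is the set of vertices of the edge (with index) `e`.
It is a sequence `v₀ e₁ v₁ e₂ … e_t v_t` with `t ≥ 2`, consecutive anchors
distinct and both incident with the traversed edge, pairwise distinct edges,
and `v₀ = v_t`. -/
structure ClosedTrail (V : Type*) (E : Type*) (F : E → Finset V) where
  len : ℕ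
  two_le_len : 2 ≤ len
  verts : Fin (len + 1) → V
  edges : Fin len → E
  mem_left : ∀ i : Fin len, verts i.castSucc ∈ F (edges i)
  mem_right : ∀ i : Fin len, verts i.succ ∈ F (edges i)
  verts_ne : ∀ i : Fin len, verts i.castSucc ≠ verts i.succ
  edges_injective : Function.Injective edges
  closed : verts 0 = verts (Fin.last len)

/-- An Euler family: a (finite) collection of pairwise anchor-disjoint and
edge-disjoint closed trails jointly traversing every edge exactly once. -/
def HasEulerFamily (V : Type*) (E : Type*) (F : E → Finset V) : Prop :=
  ∃ (n : ℕ) (T : Fin n → ClosedTrail V E F),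
    (∀ i j : Fin n, i ≠ j →
      ∀ (a : Fin ((T i).len + 1)) (b : Fin ((T j).len + 1)),
        (T i).verts a ≠ (T j).verts b) ∧
    (∀ e : E, ∃! p : (i : Fin n) × Fin ((T i).len), (T p.1).edges p.2 = e)

/-- An Euler tour: a closed trail traversing every edge exactly once. -/
def HasEulerTour (V : Type*) (E : Type*) (F : E → Finset V) : Prop :=
  ∃ T : ClosedTrail V E F, Function.Bijective T.edges

/-- An `ℓ`-covering `k`-hypergraph: `k`-uniform, and every `ℓ`-subset of
vertices lies in at least one edge. -/
def IsCoveringHypergraph (V : Type*) (E : Type*) (F : E → Finset V)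
    (ℓ k : ℕ) : Prop :=
  (∀ e : E, (F e).card = k) ∧
  (∀ S : Finset V, S.card = ℓ → ∃ e : E, S ⊆ F e)

/-- Two vertices are related if they lie in a common edge; the reflexive
transitive (symmetric) closure of this relation gives connectivity by walks. -/
def HypAdj (V : Type*) (E : Type*) (F : E → Finset V) (a b : V) : Prop :=
  ∃ e : E, a ∈ F e ∧ b ∈ F e

/-- The number of connected components of a hypergraph (including trivial
components consisting of a single isolated vertex). -/
noncomputable def numComponents (V : Type*) (E : Type*) (F : E → Finset V) : ℕ :=
  Nat.card (Quot (HypAdj V E F))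

/-- `e` is a cut edge of `H` if removing it increases the number of
connected components. -/
def IsCutEdge (V : Type*) (E : Type*) (F : E → Finset V) (e : E) : Prop :=
  numComponents V E F < numComponents V {e' : E // e' ≠ e} (fun e' => F e'.1)

/-- The incidence graph of a hypergraph: a bipartite simple graph on
`V ⊕ E`, where `Sum.inl v` is adjacent to `Sum.inr e` iff `v ∈ F e`. -/
def incidenceGraph (V : Type*) (E : Type*) (F : E → Finset V) :
    SimpleGraph (V ⊕ E) where
  Adj x y :=
    (∃ v e, x = Sum.inl v ∧ y = Sum.inr e ∧ v ∈ F e) ∨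
    (∃ v e, x = Sum.inr e ∧ y = Sum.inl v ∧ v ∈ F e)
  symm := by
    refine ⟨?_⟩
    rintro x y (⟨v, e, hx, hy, h⟩ | ⟨v, e, hx, hy, h⟩)
    · exact Or.inr ⟨v, e, hy, hx, h⟩
    · exact Or.inl ⟨v, e, hy, hx, h⟩
  loopless := by
    refine ⟨?_⟩
    rintro x (⟨v, e, hx, hy, h⟩ | ⟨v, e, hx, hy, h⟩) <;> simp_all

/-! Recording, for every hyperedge, the two vertices through which an Euler tour enters and
leaves it gives a subgraph `G'` of the incidence graph in which e-vertices have degree 2 and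
v-vertices have even degree, each passage through a vertex contributing two incidences.
Conversely, an Euler circuit of such a `G'` started at a v-vertex alternates between vertices and
hyperedges and visits every e-vertex exactly once, so it is an Euler tour of `H`. This reduces
the theorem to Euler's theorem for `G'`: a longest trail in a graph with all degrees even is
closed, since an open trail meets its start in an odd number of edges and could be extended
there; and in a connected graph it uses every edge, since otherwise some unused edge meets it and
can be prepended after rotating the trail. -/

open Finset

namespace SimpleGraph

variable {V : Type*} {G : SimpleGraph V}

lemma ncard_neighborSet_eq_degree (v : V) [Fintype (G.neighborSet v)] :
    (G.neighborSet v).ncard = G.degree v := by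
  rw [Set.ncard_eq_toFinset_card']
  rfl

namespace Walk

lemma IsTrail.countP_edges_eq_degree [DecidableEq V] {x u v : V} [Fintype (G.neighborSet x)]
    {p : G.Walk u v} (hp : p.IsTrail) (h : ∀ y, G.Adj x y → s(x, y) ∈ p.edges) :
    p.edges.countP (x ∈ ·) = G.degree x := by
  rw [← card_incidenceFinset_eq_degree, List.countP_eq_length_filter,
    ← List.toFinset_card_of_nodup (hp.edges_nodup.filter _)]
  congr 1
  ext e
  simp only [List.mem_toFinset, List.mem_filter, decide_eq_true_eq, mem_incidenceFinset,
    incidenceSet, Set.mem_ofPred_eq]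
  refine ⟨fun ⟨he, hx⟩ ↦ ⟨p.edges_subset_edgeSet he, hx⟩, fun ⟨he, hx⟩ ↦ ⟨?_, hx⟩⟩
  obtain ⟨y, rfl⟩ := Sym2.mem_iff_exists.1 hx
  exact h y he

lemma IsTrail.getVert_ne_getVert_add_two {u v : V} {p : G.Walk u v} (hp : p.IsTrail) {i : ℕ}
    (hi : i + 2 ≤ p.length) : p.getVert i ≠ p.getVert (i + 2) := by
  intro h
  have hlen : i + 1 < p.edges.length := by rw [length_edges]; omega
  have := (hp.edges_nodup.getElem_inj_iff (hi := (Nat.lt_succ_self i).trans hlen)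
    (hj := hlen)).1 (by rw [getElem_edges, getElem_edges, h, Sym2.eq_swap])
  omega

variable [DecidableEq V]

lemma IsEulerian.length_eq_card_edgeFinset [Fintype G.edgeSet] {u v : V} {p : G.Walk u v}
    (hp : p.IsEulerian) : p.length = #G.edgeFinset := by
  rw [← hp.edgesFinset_eq, ← length_edges]
  rfl

lemma IsEulerian.rotate {u v : V} {c : G.Walk v v} (hc : c.IsEulerian) (hu : u ∈ c.support) :
    (c.rotate u hu).IsEulerian :=
  (isEulerian_iff _).2 ⟨hc.isTrail.rotate hu,
    fun _ he ↦ (c.rotate_edges u hu).perm.mem_iff.2 (hc.mem_edges_iff.2 he)⟩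

variable [Fintype V] [DecidableRel G.Adj]

theorem IsTrail.isEulerian_of_forall_length_le (heven : ∀ v, Even (G.degree v))
    (hconn : ∀ x ∈ G.support, ∀ y ∈ G.support, G.Reachable x y) {u v : V} {p : G.Walk u v}
    (hp : p.IsTrail) (hmax : ∀ u' v', ∀ q : G.Walk u' v', q.IsTrail → q.length ≤ p.length) :
    u = v ∧ p.IsEulerian := by
  have saturated : ∀ {w w'} (q : G.Walk w w'), q.IsTrail → q.length = p.length →
      ∀ y, G.Adj w y → s(w, y) ∈ q.edges := by
    intro w w' q hq hlen y hy
    by_contra hnew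
    have := hmax _ _ (cons hy.symm q) ((isTrail_cons _ _).2 ⟨hq, by rwa [Sym2.eq_swap]⟩)
    simp only [length_cons] at this
    omega
  obtain rfl : u = v := by
    by_contra huv
    have hodd : ¬ Even (p.edges.countP (u ∈ ·)) := by
      simp [hp.even_countP_edges_iff, huv]
    exact hodd (hp.countP_edges_eq_degree (saturated p hp rfl) ▸ heven u)
  have hclosed : ∀ w ∈ p.support, ∀ y, G.Adj w y → s(w, y) ∈ p.edges := fun w hw y hy ↦
    (p.rotate_edges w hw).perm.mem_iff.1 <|
      saturated (p.rotate w hw) (hp.rotate hw) (p.length_rotate w hw) y hy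
  refine ⟨rfl, hp.isEulerian_of_forall_mem (Sym2.ind fun x y hxy ↦ ?_)⟩
  rw [SimpleGraph.mem_edgeSet] at hxy
  have hlen : 1 ≤ p.length := hmax _ _ (cons hxy Walk.nil) (by simp [isTrail_def])
  have hu : u ∈ G.support := ⟨p.snd, p.adj_snd (not_nil_iff_lt_length.2 hlen)⟩
  have hx : x ∈ p.toSubgraph.verts :=
    (hconn u hu x ⟨y, hxy⟩).mem_subgraphVerts
      (fun w hw y hy ↦ adj_toSubgraph_iff_mem_edges.2 <|
        hclosed w ((mem_verts_toSubgraph p).1 hw) y hy)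
      ((mem_verts_toSubgraph p).2 p.start_mem_support)
  exact hclosed x ((mem_verts_toSubgraph p).1 hx) y hxy

end Walk

open Walk

theorem exists_isEulerian_of_even_degree [Fintype V] [DecidableEq V] [DecidableRel G.Adj]
    (heven : ∀ v, Even (G.degree v))
    (hconn : ∀ x ∈ G.support, ∀ y ∈ G.support, G.Reachable x y) {u : V} (hu : u ∈ G.support) :
    ∃ p : G.Walk u u, p.IsEulerian := by
  have : Nonempty V := ⟨u⟩
  obtain ⟨w, w', p, hp, hmax⟩ := exists_isTrail_forall_isTrail_length_le_length G
  obtain ⟨rfl, hpE⟩ := hp.isEulerian_of_forall_length_le heven hconn hmax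
  obtain ⟨u', hu'⟩ := hu
  exact ⟨_, hpE.rotate (p.fst_mem_support_of_mem_edges (hpE.mem_edges_iff.2 hu'))⟩

section Bipartite

variable {α β : Type*} {G : SimpleGraph (α ⊕ β)}

lemma exists_eq_inl_of_adj_inr (hG : G ≤ completeBipartiteGraph α β) {b : β} {x : α ⊕ β}
    (h : G.Adj (.inr b) x) : ∃ a, x = .inl a := by
  rcases x with a | b'
  · exact ⟨a, rfl⟩
  · simpa using hG h

lemma card_edgeFinset_eq_sum_degree_inr [Fintype α] [Fintype β] [DecidableRel G.Adj]
    (hG : G ≤ completeBipartiteGraph α β) :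
    #G.edgeFinset = ∑ b, G.degree (.inr b) := by
  classical
  have hbip : G.IsBipartiteWith ↑(univ.map (.inl : α ↪ α ⊕ β)) ↑(univ.map (.inr : β ↪ α ⊕ β)) := by
    refine ⟨by simp [Set.disjoint_left], fun x y hxy ↦ ?_⟩
    have := hG hxy
    rcases x with _ | _ <;> rcases y with _ | _ <;> simp_all
  rw [← isBipartiteWith_sum_degrees_eq_card_edges' hbip, sum_map]
  rfl

lemma Walk.even_iff_isLeft_getVert (hG : G ≤ completeBipartiteGraph α β) {a : α} {w : α ⊕ β}
    (p : G.Walk (.inl a) w) {k : ℕ} (hk : k ≤ p.length) :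
    Even k ↔ (p.getVert k).isLeft := by
  let c : G.Coloring Bool := (CompleteBipartiteGraph.bicoloring α β).comp (Hom.ofLE hG)
  have := c.even_length_iff_congr (p.take k)
  rw [take_length, min_eq_left hk] at this
  change Even k ↔ ((Sum.inl a : α ⊕ β).isRight ↔ (p.getVert k).isRight) at this
  rw [this, Sum.isRight_inl, ← Sum.not_isLeft]
  simp

lemma Walk.IsEulerian.exists_getVert_eq_inr [DecidableEq (α ⊕ β)]
    (hG : G ≤ completeBipartiteGraph α β) {a : α} {p : G.Walk (.inl a) (.inl a)}
    (hp : p.IsEulerian) {b : β} (hb : .inr b ∈ G.support) :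
    ∃ j, 2 * j + 1 < p.length ∧ p.getVert (2 * j + 1) = .inr b := by
  obtain ⟨x, hx⟩ := hb
  obtain ⟨k, hk, hkle⟩ := mem_support_iff_exists_getVert.1 <|
    p.fst_mem_support_of_mem_edges (hp.mem_edges_iff.2 hx)
  obtain ⟨j, rfl⟩ : Odd k := Nat.not_even_iff_odd.1 <| by
    rw [p.even_iff_isLeft_getVert hG hkle, hk]
    simp
  refine ⟨j, hkle.lt_of_ne fun h ↦ ?_, hk⟩
  rw [h, getVert_length] at hk
  simp at hk

end Bipartite

end SimpleGraph

open SimpleGraph Walk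

section Incidence

variable {V E : Type*} {F : E → Finset V}

@[simp]
lemma incidenceGraph_adj_inl_inr {v : V} {e : E} :
    (incidenceGraph V E F).Adj (.inl v) (.inr e) ↔ v ∈ F e := by
  simp [incidenceGraph]

lemma incidenceGraph_le_completeBipartiteGraph :
    incidenceGraph V E F ≤ completeBipartiteGraph V E := by
  rintro x y (⟨v, e, rfl, rfl, -⟩ | ⟨v, e, rfl, rfl, -⟩) <;> simp

theorem exists_closedTrail_of_isEulerian [Fintype V] [Fintype E] [DecidableEq V] [DecidableEq E]
    [Nonempty E] {G : SimpleGraph (V ⊕ E)} [DecidableRel G.Adj] (hG : G ≤ incidenceGraph V E F)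
    (hdeg : ∀ e, G.degree (.inr e) = 2) {v : V} {p : G.Walk (.inl v) (.inl v)}
    (hp : p.IsEulerian) : ∃ T : ClosedTrail V E F, Function.Bijective T.edges := by
  have hG' := hG.trans incidenceGraph_le_completeBipartiteGraph
  set n := Fintype.card E
  have hlen : p.length = 2 * n := by
    rw [hp.length_eq_card_edgeFinset, card_edgeFinset_eq_sum_degree_inr hG']
    simp [hdeg, n, mul_comm]
  have hvert : ∀ i : Fin (n + 1), ∃ x, p.getVert (2 * i) = .inl x := fun i ↦
    Sum.isLeft_iff.1 ((p.even_iff_isLeft_getVert hG' (by omega)).1 (even_two_mul _))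
  have hedge : ∀ i : Fin n, ∃ e, p.getVert (2 * i + 1) = .inr e := fun i ↦
    Sum.isRight_iff.1 <| Sum.not_isLeft.1 fun h ↦
      Nat.not_even_two_mul_add_one i ((p.even_iff_isLeft_getVert hG' (by omega)).2 h)
  choose verts hverts using hvert
  choose edges hedges using hedge
  have hleft (i : Fin n) : p.getVert (2 * i) = .inl (verts i.castSucc) := hverts i.castSucc
  have hright (i : Fin n) : p.getVert (2 * i + 2) = .inl (verts i.succ) := by
    simpa [Nat.mul_add] using hverts i.succ
  have mem_left (i : Fin n) : verts i.castSucc ∈ F (edges i) := by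
    simpa [hleft, hedges] using hG (p.adj_getVert_succ (i := 2 * i) (by omega))
  have mem_right (i : Fin n) : verts i.succ ∈ F (edges i) := by
    simpa [hright, hedges, adj_comm] using hG (p.adj_getVert_succ (i := 2 * i + 1) (by omega))
  have verts_ne (i : Fin n) : verts i.castSucc ≠ verts i.succ := fun h ↦
    hp.isTrail.getVert_ne_getVert_add_two (i := 2 * i) (by omega) <| by
      simpa [hright, h] using hleft i
  have closed : verts 0 = verts (Fin.last n) := Sum.inl_injective <| by
    rw [← hverts, ← hverts, Fin.val_zero, Fin.val_last, mul_zero, getVert_zero, ← hlen,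
      getVert_length]
  have edges_surj : Function.Surjective edges := fun e ↦ by
    obtain ⟨j, hj, hje⟩ := hp.exists_getVert_eq_inr hG'
      ((G.degree_pos_iff_mem_support (.inr e)).1 (by rw [hdeg]; omega))
    exact ⟨⟨j, by omega⟩, Sum.inr_injective (α := V) ((hedges _).symm.trans hje)⟩
  have edges_bij : Function.Bijective edges :=
    (Fintype.bijective_iff_surjective_and_card _).2 ⟨edges_surj, by simp [n]⟩
  have two_le : 2 ≤ n := by
    have : 0 < n := Fintype.card_pos
    by_contra! h
    have h1 : n = 1 := by omega
    exact verts_ne ⟨0, this⟩ (by convert closed using 2 <;> ext <;> simp [h1])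
  exact ⟨⟨n, two_le, verts, edges, mem_left, mem_right, verts_ne, edges_bij.1, closed⟩, edges_bij⟩

end Incidence

namespace ClosedTrail

variable {V E : Type*} {F : E → Finset V} (T : ClosedTrail V E F)

def toGraph : SimpleGraph (V ⊕ E) :=
  SimpleGraph.fromRel fun x y ↦
    ∃ i, (x = .inl (T.verts i.castSucc) ∨ x = .inl (T.verts i.succ)) ∧ y = .inr (T.edges i)

@[simp]
lemma toGraph_adj_inl_inr {v : V} {e : E} :
    T.toGraph.Adj (.inl v) (.inr e) ↔
      ∃ i, (T.verts i.castSucc = v ∨ T.verts i.succ = v) ∧ T.edges i = e := by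
  simp [toGraph, eq_comm]

lemma toGraph_le : T.toGraph ≤ incidenceGraph V E F := by
  rintro (v | e) (w | f) h
  · simp [toGraph] at h
  · obtain ⟨i, rfl | rfl, rfl⟩ := T.toGraph_adj_inl_inr.1 h
    exacts [incidenceGraph_adj_inl_inr.2 (T.mem_left i),
      incidenceGraph_adj_inl_inr.2 (T.mem_right i)]
  · obtain ⟨i, rfl | rfl, rfl⟩ := T.toGraph_adj_inl_inr.1 h.symm
    exacts [(incidenceGraph_adj_inl_inr.2 (T.mem_left i)).symm,
      (incidenceGraph_adj_inl_inr.2 (T.mem_right i)).symm]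
  · simp [toGraph] at h

lemma neighborSet_toGraph_inr (i : Fin T.len) :
    T.toGraph.neighborSet (.inr (T.edges i)) =
      {.inl (T.verts i.castSucc), .inl (T.verts i.succ)} := by
  ext (v | e)
  · simp [adj_comm, T.edges_injective.eq_iff, eq_comm]
  · simp [toGraph]

lemma ncard_neighborSet_toGraph_inr (hT : Function.Surjective T.edges) (e : E) :
    (T.toGraph.neighborSet (.inr e)).ncard = 2 := by
  obtain ⟨i, rfl⟩ := hT e
  rw [neighborSet_toGraph_inr, Set.ncard_pair (by simpa using T.verts_ne i)]

lemma card_verts_castSucc_eq_card_verts_succ [DecidableEq V] (v : V) :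
    #{i : Fin T.len | T.verts i.castSucc = v} = #{i : Fin T.len | T.verts i.succ = v} := by
  have h₁ := Fin.sum_univ_castSucc fun k ↦ if T.verts k = v then 1 else 0
  have h₂ := Fin.sum_univ_succ fun k ↦ if T.verts k = v then 1 else 0
  simp only [Finset.card_filter, ← T.closed] at h₁ h₂ ⊢
  omega

lemma even_ncard_neighborSet_toGraph_inl (v : V) :
    Even (T.toGraph.neighborSet (.inl v)).ncard := by
  classical
  have hset : T.toGraph.neighborSet (.inl v) =
      (fun i ↦ .inr (T.edges i)) '' {i | T.verts i.castSucc = v ∨ T.verts i.succ = v} := by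
    ext (w | e)
    · simp [toGraph]
    · simp [eq_comm]
  rw [hset, Set.ncard_image_of_injective _ fun i j h ↦ T.edges_injective (Sum.inr_injective h),
    Set.ncard_eq_toFinset_card', Set.toFinset_ofPred, filter_or, card_union_of_disjoint]
  · simp only [T.card_verts_castSucc_eq_card_verts_succ v]
    exact Even.add_self _
  · exact disjoint_filter.2 fun i _ h₁ h₂ ↦ T.verts_ne i (h₁.trans h₂.symm)

lemma toGraph_reachable_verts_zero (k : Fin (T.len + 1)) :
    T.toGraph.Reachable (.inl (T.verts 0)) (.inl (T.verts k)) := by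
  induction k using Fin.induction with
  | zero => rfl
  | succ i ih =>
    have h₁ : T.toGraph.Adj (.inl (T.verts i.castSucc)) (.inr (T.edges i)) :=
      T.toGraph_adj_inl_inr.2 ⟨i, .inl rfl, rfl⟩
    have h₂ : T.toGraph.Adj (.inl (T.verts i.succ)) (.inr (T.edges i)) :=
      T.toGraph_adj_inl_inr.2 ⟨i, .inr rfl, rfl⟩
    exact ih.trans (h₁.reachable.trans h₂.reachable.symm)

lemma toGraph_reachable_of_mem_support {x : V ⊕ E} (hx : x ∈ T.toGraph.support) :
    T.toGraph.Reachable (.inl (T.verts 0)) x := by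
  obtain ⟨y, hxy⟩ := hx
  rcases x with v | e <;> rcases y with w | f
  · simp [toGraph] at hxy
  · obtain ⟨i, rfl | rfl, -⟩ := T.toGraph_adj_inl_inr.1 hxy
    exacts [T.toGraph_reachable_verts_zero _, T.toGraph_reachable_verts_zero _]
  · obtain ⟨i, -, rfl⟩ := T.toGraph_adj_inl_inr.1 hxy.symm
    exact (T.toGraph_reachable_verts_zero i.castSucc).trans
      (T.toGraph_adj_inl_inr.2 ⟨i, .inl rfl, rfl⟩).reachable
  · simp [toGraph] at hxy

lemma toGraph_reachable {x y : V ⊕ E} (hx : x ∈ T.toGraph.support) (hy : y ∈ T.toGraph.support) :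
    T.toGraph.Reachable x y :=
  (T.toGraph_reachable_of_mem_support hx).symm.trans (T.toGraph_reachable_of_mem_support hy)

end ClosedTrail

theorem eulerian_iff_incidence_general {V E : Type*} [Fintype V] [Fintype E]
    (F : E → Finset V) :
    (IsEmpty E ∨ HasEulerTour V E F) ↔
      ∃ G' : SimpleGraph (V ⊕ E), G' ≤ incidenceGraph V E F ∧
        (∀ x y : V ⊕ E, (∃ x', G'.Adj x x') → (∃ y', G'.Adj y y') →
          G'.Reachable x y) ∧
        (∀ e : E, (G'.neighborSet (Sum.inr e)).ncard = 2) ∧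
        (∀ v : V, Even ((G'.neighborSet (Sum.inl v)).ncard)) := by
  classical
  constructor
  · rintro (hE | ⟨T, hT⟩)
    · exact ⟨⊥, bot_le, fun _ _ ⟨_, h⟩ ↦ h.elim, isEmptyElim, by simp⟩
    exact ⟨T.toGraph, T.toGraph_le, fun _ _ ↦ T.toGraph_reachable,
      T.ncard_neighborSet_toGraph_inr hT.2, T.even_ncard_neighborSet_toGraph_inl⟩
  · rintro ⟨G, hG, hconn, hdeg, heven⟩
    rcases isEmpty_or_nonempty E with hE | hE
    · exact .inl hE
    simp only [ncard_neighborSet_eq_degree] at hdeg heven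
    obtain ⟨x, hx⟩ :=
      (G.degree_pos_iff_exists_adj (.inr (Classical.arbitrary E))).1 (by simp [hdeg])
    obtain ⟨v, rfl⟩ :=
      exists_eq_inl_of_adj_inr (hG.trans incidenceGraph_le_completeBipartiteGraph) hx
    obtain ⟨p, hp⟩ := exists_isEulerian_of_even_degree (Sum.rec heven fun e ↦ hdeg e ▸ even_two)
      (fun x hx y hy ↦ hconn x y hx hy) ⟨_, hx.symm⟩
    exact .inr (exists_closedTrail_of_isEulerian hG hdeg hp)

/-- A hypergraph `H` is eulerian (empty or admits an Euler tour)
iff its incidence graph has a spanning subgraph `G'` with at most one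
non-trivial connected component in which every e-vertex has degree 2 and
every v-vertex has even degree. -/
theorem eulerian_iff_incidence {V E : Type*} [Fintype V] [Nonempty V] [Fintype E]
    (F : E → Finset V) :
    (IsEmpty E ∨ HasEulerTour V E F) ↔
      ∃ G' : SimpleGraph (V ⊕ E), G' ≤ incidenceGraph V E F ∧
        (∀ x y : V ⊕ E, (∃ x', G'.Adj x x') → (∃ y', G'.Adj y y') →
          G'.Reachable x y) ∧
        (∀ e : E, (G'.neighborSet (Sum.inr e)).ncard = 2) ∧
        (∀ v : V, Even ((G'.neighborSet (Sum.inl v)).ncard)) :=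
  eulerian_iff_incidence_general F
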